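/- For every integer n ≥ 1, the spectral radius of A_n is 2 + 2κ_n: the real number 2 + 2κ_n is an eigenvalue of A_n, and every complex eigenvalue μ of A_n satisfies |μ| ≤ 2 + 2κ_n. -/

import Mathlib

open Matrix

/-- The paired tent map `T_κ : [-1,1] → [-1,1]`. -/
noncomputable def pairedTent (κ : ℝ) (x : ℝ) : ℝ :=
  if x ≤ -(1/2) then 2*(1+κ)*(x+1) - 1
  else if x < 0 then -(2*(1+κ))*x - 1
  else if x = 0 then 0
  else if x ≤ 1/2 then -(2*(1+κ))*x + 1
  else 2*(1+κ)*(x-1) + 1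

/-- The partition points `p_0 < ⋯ < p_{2n+4}` of the Markov partition for `T_{κ_n}`. -/
noncomputable def markovPoint (n : ℕ) (κ : ℝ) (i : ℕ) : ℝ :=
  if i = 0 then -1
  else if i < n then (2 + 2*κ)^i * κ - 1
  else if i = n then -(1/2)
  else if i = n + 1 then -κ
  else if i = n + 2 then 0
  else if i = n + 3 then κ
  else if i = n + 4 then 1/2
  else if i < 2*n + 4 then 1 - (2 + 2*κ)^(2*n + 4 - i) * κ
  else 1

/-- The interval `R_i = (p_{i-1}, p_i)`, for `1 ≤ i ≤ 2n+4`. -/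
noncomputable def markovInterval (n : ℕ) (κ : ℝ) (i : ℕ) : Set ℝ :=
  Set.Ioo (markovPoint n κ (i - 1)) (markovPoint n κ i)

open scoped Classical in
/-- The `(2n+4) × (2n+4)` adjacency matrix `A_n`: the `(i,j)` entry (1-based) is `1`
if `R_i ⊆ T_n(R_j)` and `0` otherwise. -/
noncomputable def Amat (n : ℕ) (κ : ℝ) : Matrix (Fin (2*n + 4)) (Fin (2*n + 4)) ℂ :=
  Matrix.of fun i j =>
    if markovInterval n κ ((i : ℕ) + 1) ⊆ pairedTent κ '' markovInterval n κ ((j : ℕ) + 1)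
    then 1 else 0

/-- The `(2n+4) × (2n+4)` exchange matrix `J_n`: entry `(i,j)` (1-based) is `1` iff
`i + j = 2n+5`. -/
def Jmat (n : ℕ) : Matrix (Fin (2*n + 4)) (Fin (2*n + 4)) ℂ :=
  Matrix.of fun i j => if (i : ℕ) + 1 + ((j : ℕ) + 1) = 2*n + 5 then 1 else 0

/-- index of `λ^i κ - 1` among partition points, for `1 ≤ i ≤ n`. -/
def sIdx (n i : ℕ) : ℕ := if i ≤ n - 1 then i else n + 2

def aIdx (n j : ℕ) : ℕ :=
  if j ≤ 1 then 0
  else if j ≤ n then sIdx n j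
  else if j = n+1 then sIdx n 1
  else if j = n+2 then 0
  else if j = n+3 then 2*n+4 - sIdx n 1
  else if j ≤ n+5 then n+1
  else if j ≤ 2*n+3 then 2*n+4 - sIdx n (2*n+6-j)
  else 2*n+4 - sIdx n 2

def bIdx (n j : ℕ) : ℕ :=
  if j = 0 then 0
  else if j ≤ n-1 then sIdx n (j+1)
  else if j ≤ n+1 then n+3
  else if j = n+2 then sIdx n 1
  else if j = n+3 then 2*n+4
  else if j = n+4 then 2*n+4 - sIdx n 1
  else if j ≤ 2*n+3 then 2*n+4 - sIdx n (2*n+5-j)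
  else 2*n+4

section eval
variable (n : ℕ) (κ : ℝ) (hn : 1 ≤ n)

lemma mp_zero : markovPoint n κ 0 = -1 := by unfold markovPoint; split_ifs <;> first | rfl | omega | simp_all

lemma mp_mid {i : ℕ} (h1 : 1 ≤ i) (h2 : i < n) :
    markovPoint n κ i = (2 + 2*κ)^i * κ - 1 := by
  unfold markovPoint; split_ifs <;> first | rfl | omega | simp_all

include hn in
lemma mp_n : markovPoint n κ n = -(1/2) := by
  unfold markovPoint; split_ifs <;> first | rfl | omega | simp_all

lemma mp_n1 : markovPoint n κ (n+1) = -κ := by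
  unfold markovPoint; split_ifs <;> first | rfl | omega | simp_all

lemma mp_n2 : markovPoint n κ (n+2) = 0 := by
  unfold markovPoint; split_ifs <;> first | rfl | omega | simp_all

lemma mp_n3 : markovPoint n κ (n+3) = κ := by
  unfold markovPoint; split_ifs <;> first | rfl | omega | simp_all

include hn in
lemma mp_n4 : markovPoint n κ (n+4) = 1/2 := by
  unfold markovPoint; split_ifs <;> first | rfl | omega | simp_all

include hn in
lemma mp_high {i : ℕ} (h1 : n+5 ≤ i) (h2 : i < 2*n+4) :
    markovPoint n κ i = 1 - (2 + 2*κ)^(2*n + 4 - i) * κ := by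
  unfold markovPoint; split_ifs <;> first | rfl | omega | simp_all

include hn in
lemma mp_top : markovPoint n κ (2*n+4) = 1 := by
  unfold markovPoint; split_ifs <;> first | rfl | omega | simp_all

include hn in
lemma mp_sIdx {i : ℕ} (h1 : 1 ≤ i) (h2 : i ≤ n) (heq : (2 + 2*κ)^n * κ = 1) :
    markovPoint n κ (sIdx n i) = (2 + 2*κ)^i * κ - 1 := by
  unfold sIdx
  split_ifs with h
  · exact mp_mid n κ h1 (by omega)
  · have hi : i = n := by omega
    rw [hi, mp_n2, heq]; ring

include hn in
lemma mp_sIdx' {i : ℕ} (h1 : 1 ≤ i) (h2 : i ≤ n) (heq : (2 + 2*κ)^n * κ = 1) :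
    markovPoint n κ (2*n+4 - sIdx n i) = 1 - (2 + 2*κ)^i * κ := by
  unfold sIdx
  split_ifs with h
  · rw [mp_high n κ hn (by omega) (by omega),
      show 2*n+4 - (2*n+4 - i) = i by omega]
  · have hi : i = n := by omega
    have h2 : 2*n+4 - (n+2) = n+2 := by omega
    rw [hi, h2, mp_n2, heq]; ring

lemma sIdx_le {i : ℕ} (h : i ≤ n) : sIdx n i ≤ n + 2 := by unfold sIdx; split_ifs <;> omega

end eval

section mono
variable {n : ℕ} {κ : ℝ}

lemma powmul_lt (hκ0 : 0 < κ) (e : ℕ) :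
    (2 + 2*κ)^e * κ < (2 + 2*κ)^(e+1) * κ := by
  have hp : (0:ℝ) < (2+2*κ)^e * κ := by positivity
  rw [pow_succ]
  nlinarith

lemma key_half (hn : 1 ≤ n) (hκ0 : 0 < κ) (heq : (2 + 2*κ)^n * κ = 1) :
    (2 + 2*κ)^(n-1) * κ < 1/2 := by
  obtain ⟨m, rfl⟩ : ∃ m, n = m+1 := ⟨n-1, by omega⟩
  simp only [Nat.add_sub_cancel]
  have hp : (0:ℝ) < (2+2*κ)^m * κ := by positivity
  rw [pow_succ] at heq
  nlinarith

lemma pm_step (hn : 1 ≤ n) (hκ0 : 0 < κ) (hκ2 : κ < 1/2)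
    (heq : (2 + 2*κ)^n * κ = 1) {i : ℕ} (hi : i < 2*n+4) :
    markovPoint n κ i < markovPoint n κ (i+1) := by
  have hl1 : (1:ℝ) < 2+2*κ := by linarith
  have key := key_half hn hκ0 heq
  by_cases h0 : i = 0
  · subst h0
    rw [mp_zero]
    by_cases h1 : n = 1
    · rw [show (0+1) = n by omega, mp_n n κ hn]; norm_num
    · rw [mp_mid n κ le_rfl (by omega)]
      have : (0:ℝ) < (2+2*κ)^1 * κ := by positivity
      linarith
  by_cases hmid : i + 1 < n
  · rw [mp_mid n κ (by omega) (by omega), mp_mid n κ (by omega) hmid]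
    have := powmul_lt hκ0 (κ := κ) i
    linarith
  by_cases hin : i + 1 = n
  · rw [mp_mid n κ (by omega) (by omega), show i+1 = n from hin, mp_n n κ hn]
    have : i = n - 1 := by omega
    rw [this]
    linarith
  by_cases h : i = n
  · rw [h, mp_n n κ hn, mp_n1]; linarith
  by_cases h1 : i = n+1
  · rw [h1, mp_n1, mp_n2]; linarith
  by_cases h2 : i = n+2
  · rw [h2, mp_n2, mp_n3]; linarith
  by_cases h3 : i = n+3
  · rw [h3, mp_n3, mp_n4 n κ hn]; linarith
  by_cases h4 : i = n+4
  · rw [h4, mp_n4 n κ hn]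
    by_cases hn1 : n = 1
    · rw [show n+4+1 = 2*n+4 by omega, mp_top n κ hn]; norm_num
    · rw [mp_high n κ hn (by omega) (by omega), show 2*n+4-(n+4+1) = n-1 by omega]
      linarith
  by_cases h5 : i + 1 < 2*n+4
  · rw [mp_high n κ hn (by omega) (by omega), mp_high n κ hn (by omega) h5]
    have heq2 : 2*n+4-i = (2*n+4-(i+1))+1 := by omega
    rw [heq2]
    have := powmul_lt hκ0 (κ := κ) (2*n+4-(i+1))
    linarith
  · rw [show i+1 = 2*n+4 by omega, mp_top n κ hn]
    by_cases hn1 : n = 1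
    · omega
    · rw [mp_high n κ hn (by omega) (by omega), show 2*n+4-i = 1 by omega]
      have : (0:ℝ) < (2+2*κ)^1 * κ := by positivity
      linarith

lemma pm_lt (hn : 1 ≤ n) (hκ0 : 0 < κ) (hκ2 : κ < 1/2)
    (heq : (2 + 2*κ)^n * κ = 1) {i j : ℕ} (h : i < j) (hj : j ≤ 2*n+4) :
    markovPoint n κ i < markovPoint n κ j := by
  induction j with
  | zero => omega
  | succ k ih =>
    rcases Nat.lt_or_ge i k with h' | h'
    · exact lt_trans (ih h' (by omega)) (pm_step hn hκ0 hκ2 heq (by omega))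
    · have : i = k := by omega
      rw [this]
      exact pm_step hn hκ0 hκ2 heq (by omega)

lemma pm_le (hn : 1 ≤ n) (hκ0 : 0 < κ) (hκ2 : κ < 1/2)
    (heq : (2 + 2*κ)^n * κ = 1) {i j : ℕ} (h : i ≤ j) (hj : j ≤ 2*n+4) :
    markovPoint n κ i ≤ markovPoint n κ j := by
  rcases Nat.lt_or_ge i j with h' | h'
  · exact le_of_lt (pm_lt hn hκ0 hκ2 heq h' hj)
  · have : i = j := by omega
    rw [this]

lemma pm_le_rev (hn : 1 ≤ n) (hκ0 : 0 < κ) (hκ2 : κ < 1/2)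
    (heq : (2 + 2*κ)^n * κ = 1) {i j : ℕ} (hi : i ≤ 2*n+4) (hj : j ≤ 2*n+4)
    (h : markovPoint n κ i ≤ markovPoint n κ j) : i ≤ j := by
  by_contra hc
  exact absurd h (not_le.2 (pm_lt hn hκ0 hκ2 heq (by omega) hi))

end mono

section image

lemma img_incr {c d u v : ℝ} (hc : 0 < c) (f : ℝ → ℝ)
    (hf : ∀ x ∈ Set.Ioo u v, f x = c*x+d) :
    f '' Set.Ioo u v = Set.Ioo (c*u+d) (c*v+d) := by
  rw [Set.image_congr hf]
  ext y
  simp only [Set.mem_image, Set.mem_Ioo]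
  constructor
  · rintro ⟨x, ⟨hx1, hx2⟩, rfl⟩
    constructor <;> nlinarith
  · rintro ⟨h1, h2⟩
    refine ⟨(y-d)/c, ⟨?_, ?_⟩, by field_simp [ne_of_gt hc]; ring⟩
    · rw [lt_div_iff₀ hc]; linarith
    · rw [div_lt_iff₀ hc]; linarith

lemma img_decr {c d u v : ℝ} (hc : c < 0) (f : ℝ → ℝ)
    (hf : ∀ x ∈ Set.Ioo u v, f x = c*x+d) :
    f '' Set.Ioo u v = Set.Ioo (c*v+d) (c*u+d) := by
  rw [Set.image_congr hf]
  ext y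
  simp only [Set.mem_image, Set.mem_Ioo]
  constructor
  · rintro ⟨x, ⟨hx1, hx2⟩, rfl⟩
    constructor <;> nlinarith
  · rintro ⟨h1, h2⟩
    refine ⟨(y-d)/c, ⟨?_, ?_⟩, by field_simp [ne_of_lt hc]; ring⟩
    · rw [lt_div_iff_of_neg hc]; linarith
    · rw [div_lt_iff_of_neg hc]; linarith

variable {n : ℕ} {κ : ℝ}

lemma aIdx_one : aIdx n 1 = 0 := by unfold aIdx; rw [if_pos (le_refl 1)]

lemma aIdx_A {j : ℕ} (h1 : 2 ≤ j) (h2 : j ≤ n) : aIdx n j = sIdx n j := by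
  unfold aIdx; split_ifs <;> first | rfl | (exfalso; omega) | (exfalso; simp_all) | (exfalso; simp_all; omega)

lemma aIdx_B (hn : 1 ≤ n) : aIdx n (n+1) = sIdx n 1 := by
  unfold aIdx; split_ifs <;> first | rfl | (exfalso; omega) | (exfalso; simp_all) | (exfalso; simp_all; omega)

lemma aIdx_C : aIdx n (n+2) = 0 := by
  unfold aIdx; split_ifs <;> first | rfl | (exfalso; omega) | (exfalso; simp_all) | (exfalso; simp_all; omega)

lemma aIdx_D : aIdx n (n+3) = 2*n+4 - sIdx n 1 := by
  unfold aIdx; split_ifs <;> first | rfl | (exfalso; omega) | (exfalso; simp_all) | (exfalso; simp_all; omega)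

lemma aIdx_E : aIdx n (n+4) = n+1 := by
  unfold aIdx; split_ifs <;> first | rfl | (exfalso; omega) | (exfalso; simp_all) | (exfalso; simp_all; omega)

lemma aIdx_E' : aIdx n (n+5) = n+1 := by
  unfold aIdx; split_ifs <;> first | rfl | (exfalso; omega) | (exfalso; simp_all) | (exfalso; simp_all; omega)

lemma aIdx_F {j : ℕ} (h1 : n+6 ≤ j) (h2 : j ≤ 2*n+4) :
    aIdx n j = 2*n+4 - sIdx n (2*n+6-j) := by
  unfold aIdx
  rw [if_neg (by omega), if_neg (by omega), if_neg (by omega), if_neg (by omega),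
    if_neg (by omega), if_neg (by omega)]
  split_ifs with h
  · rfl
  · rw [show 2*n+6-j = 2 by omega]

lemma bIdx_A {j : ℕ} (h1 : 1 ≤ j) (h2 : j ≤ n-1) : bIdx n j = sIdx n (j+1) := by
  unfold bIdx; split_ifs <;> first | rfl | (exfalso; omega) | (exfalso; simp_all) | (exfalso; simp_all; omega)

lemma bIdx_n (hn : 1 ≤ n) : bIdx n n = n+3 := by
  unfold bIdx; split_ifs <;> first | rfl | (exfalso; omega) | (exfalso; simp_all) | (exfalso; simp_all; omega)

lemma bIdx_B : bIdx n (n+1) = n+3 := by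
  unfold bIdx; split_ifs <;> first | rfl | (exfalso; omega) | (exfalso; simp_all) | (exfalso; simp_all; omega)

lemma bIdx_C : bIdx n (n+2) = sIdx n 1 := by
  unfold bIdx; split_ifs <;> first | rfl | (exfalso; omega) | (exfalso; simp_all) | (exfalso; simp_all; omega)

lemma bIdx_D : bIdx n (n+3) = 2*n+4 := by
  unfold bIdx; split_ifs <;> first | rfl | (exfalso; omega) | (exfalso; simp_all) | (exfalso; simp_all; omega)

lemma bIdx_E : bIdx n (n+4) = 2*n+4 - sIdx n 1 := by
  unfold bIdx; split_ifs <;> first | rfl | (exfalso; omega) | (exfalso; simp_all) | (exfalso; simp_all; omega)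

lemma bIdx_F {j : ℕ} (h1 : n+5 ≤ j) (h2 : j ≤ 2*n+3) :
    bIdx n j = 2*n+4 - sIdx n (2*n+5-j) := by
  unfold bIdx; split_ifs <;> first | rfl | (exfalso; omega) | (exfalso; simp_all) | (exfalso; simp_all; omega)

lemma bIdx_top (hn : 1 ≤ n) : bIdx n (2*n+4) = 2*n+4 := by
  unfold bIdx; split_ifs <;> first | rfl | (exfalso; omega) | (exfalso; simp_all) | (exfalso; simp_all; omega)

end image

section spec
variable {n : ℕ} {κ : ℝ}

lemma aIdx_le {j : ℕ} (hj : j ≤ 2*n+4) : aIdx n j ≤ 2*n+4 := by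
  unfold aIdx sIdx; split_ifs <;> omega

lemma bIdx_le {j : ℕ} (hj : j ≤ 2*n+4) : bIdx n j ≤ 2*n+4 := by
  unfold bIdx sIdx; split_ifs <;> omega

lemma image_spec (hn : 1 ≤ n) (hκ0 : 0 < κ) (hκ2 : κ < 1/2)
    (heq : (2 + 2*κ)^n * κ = 1) {j : ℕ} (hj1 : 1 ≤ j) (hj2 : j ≤ 2*n+4) :
    pairedTent κ '' markovInterval n κ j
      = Set.Ioo (markovPoint n κ (aIdx n j)) (markovPoint n κ (bIdx n j)) ∧
    markovPoint n κ (bIdx n j) - markovPoint n κ (aIdx n j)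
      = (2+2*κ) * (markovPoint n κ j - markovPoint n κ (j-1)) := by
  have hl0 : (0:ℝ) < 2+2*κ := by linarith
  unfold markovInterval
  by_cases hA : j ≤ n
  · -- left outer branch
    have hub : markovPoint n κ j ≤ -(1/2) := by
      rw [← mp_n n κ hn]; exact pm_le hn hκ0 hκ2 heq hA (by omega)
    have him : ∀ x ∈ Set.Ioo (markovPoint n κ (j-1)) (markovPoint n κ j),
        pairedTent κ x = (2+2*κ)*x + (1+2*κ) := by
      intro x hx
      unfold pairedTent
      rw [if_pos (by linarith [hx.2] : x ≤ -(1/2))]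
      ring
    rw [img_incr hl0 _ him]
    have ea : markovPoint n κ (aIdx n j) = (2+2*κ) * markovPoint n κ (j-1) + (1+2*κ) := by
      by_cases h1 : j = 1
      · subst h1
        simp only [aIdx_one, Nat.sub_self, mp_zero]; ring
      · rw [aIdx_A (by omega) hA, mp_sIdx n κ hn (by omega) hA heq,
          mp_mid n κ (by omega) (by omega),
          show (2+2*κ)^j = (2+2*κ) * (2+2*κ)^(j-1) by rw [← pow_succ']; congr 1; omega]
        ring
    have eb : markovPoint n κ (bIdx n j) = (2+2*κ) * markovPoint n κ j + (1+2*κ) := by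
      by_cases h1 : j ≤ n-1
      · rw [bIdx_A hj1 h1, mp_sIdx n κ hn (by omega) (by omega) heq,
          mp_mid n κ hj1 (by omega),
          show (2+2*κ)^(j+1) = (2+2*κ) * (2+2*κ)^j by rw [← pow_succ']]
        ring
      · have hjn : j = n := by omega
        rw [hjn, bIdx_n hn, mp_n3, mp_n n κ hn]; ring
    rw [ea, eb]
    exact ⟨rfl, by ring⟩
  by_cases hB : j = n+1
  · subst hB
    rw [show n+1-1 = n by omega, mp_n n κ hn, mp_n1]
    have him : ∀ x ∈ Set.Ioo (-(1/2)) (-κ),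
        pairedTent κ x = (-(2+2*κ))*x + (-1) := by
      intro x hx
      obtain ⟨hx1, hx2⟩ := hx
      unfold pairedTent
      rw [if_neg (not_le.2 hx1), if_pos (by linarith : x < 0)]
      ring
    rw [img_decr (by linarith : -(2+2*κ) < 0) _ him]
    have ea : markovPoint n κ (aIdx n (n+1)) = (-(2+2*κ))*(-κ) + (-1) := by
      rw [aIdx_B hn, mp_sIdx n κ hn le_rfl hn heq, pow_one]; ring
    have eb : markovPoint n κ (bIdx n (n+1)) = (-(2+2*κ))*(-(1/2)) + (-1) := by
      rw [bIdx_B, mp_n3]; ring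
    rw [ea, eb]
    exact ⟨rfl, by ring⟩
  by_cases hC : j = n+2
  · subst hC
    rw [show n+2-1 = n+1 by omega, mp_n1, mp_n2]
    have him : ∀ x ∈ Set.Ioo (-κ) (0:ℝ),
        pairedTent κ x = (-(2+2*κ))*x + (-1) := by
      intro x hx
      obtain ⟨hx1, hx2⟩ := hx
      unfold pairedTent
      rw [if_neg (not_le.2 (by linarith)), if_pos hx2]
      ring
    rw [img_decr (by linarith : -(2+2*κ) < 0) _ him]
    have ea : markovPoint n κ (aIdx n (n+2)) = (-(2+2*κ))*0 + (-1) := by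
      rw [aIdx_C, mp_zero]; ring
    have eb : markovPoint n κ (bIdx n (n+2)) = (-(2+2*κ))*(-κ) + (-1) := by
      rw [bIdx_C, mp_sIdx n κ hn le_rfl hn heq, pow_one]; ring
    rw [ea, eb]
    exact ⟨rfl, by ring⟩
  by_cases hD : j = n+3
  · subst hD
    rw [show n+3-1 = n+2 by omega, mp_n2, mp_n3]
    have him : ∀ x ∈ Set.Ioo (0:ℝ) κ,
        pairedTent κ x = (-(2+2*κ))*x + 1 := by
      intro x hx
      obtain ⟨hx1, hx2⟩ := hx
      unfold pairedTent
      rw [if_neg (not_le.2 (by linarith)), if_neg (not_lt.2 (le_of_lt hx1)),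
        if_neg (ne_of_gt hx1), if_pos (by linarith : x ≤ 1/2)]
      ring
    rw [img_decr (by linarith : -(2+2*κ) < 0) _ him]
    have ea : markovPoint n κ (aIdx n (n+3)) = (-(2+2*κ))*κ + 1 := by
      rw [aIdx_D, mp_sIdx' n κ hn le_rfl hn heq, pow_one]; ring
    have eb : markovPoint n κ (bIdx n (n+3)) = (-(2+2*κ))*0 + 1 := by
      rw [bIdx_D, mp_top n κ hn]; ring
    rw [ea, eb]
    exact ⟨rfl, by ring⟩
  by_cases hE : j = n+4
  · subst hE
    rw [show n+4-1 = n+3 by omega, mp_n3, mp_n4 n κ hn]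
    have him : ∀ x ∈ Set.Ioo κ (1/2 : ℝ),
        pairedTent κ x = (-(2+2*κ))*x + 1 := by
      intro x hx
      obtain ⟨hx1, hx2⟩ := hx
      unfold pairedTent
      rw [if_neg (not_le.2 (by linarith)), if_neg (not_lt.2 (by linarith)),
        if_neg (ne_of_gt (by linarith : (0:ℝ) < x)), if_pos (le_of_lt hx2)]
      ring
    rw [img_decr (by linarith : -(2+2*κ) < 0) _ him]
    have ea : markovPoint n κ (aIdx n (n+4)) = (-(2+2*κ))*(1/2) + 1 := by
      rw [aIdx_E, mp_n1]; ring
    have eb : markovPoint n κ (bIdx n (n+4)) = (-(2+2*κ))*κ + 1 := by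
      rw [bIdx_E, mp_sIdx' n κ hn le_rfl hn heq, pow_one]; ring
    rw [ea, eb]
    exact ⟨rfl, by ring⟩
  · -- right outer branch : n+5 ≤ j ≤ 2n+4
    have hj5 : n+5 ≤ j := by omega
    have hlb : (1/2 : ℝ) ≤ markovPoint n κ (j-1) := by
      rw [← mp_n4 n κ hn]; exact pm_le hn hκ0 hκ2 heq (by omega) (by omega)
    have him : ∀ x ∈ Set.Ioo (markovPoint n κ (j-1)) (markovPoint n κ j),
        pairedTent κ x = (2+2*κ)*x + (1-(2+2*κ)) := by
      intro x hx
      have hxx : (1/2 : ℝ) < x := lt_of_le_of_lt hlb hx.1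
      unfold pairedTent
      rw [if_neg (not_le.2 (by linarith)), if_neg (not_lt.2 (by linarith)),
        if_neg (ne_of_gt (by linarith : (0:ℝ) < x)), if_neg (not_le.2 hxx)]
      ring
    rw [img_incr hl0 _ him]
    have ea : markovPoint n κ (aIdx n j)
        = (2+2*κ) * markovPoint n κ (j-1) + (1-(2+2*κ)) := by
      by_cases h1 : j = n+5
      · subst h1
        rw [show n+5-1 = n+4 by omega, aIdx_E', mp_n1, mp_n4 n κ hn]; ring
      · rw [aIdx_F (by omega) hj2, mp_sIdx' n κ hn (by omega) (by omega) heq,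
          mp_high n κ hn (show n+5 ≤ j-1 by omega) (show j-1 < 2*n+4 by omega),
          show 2*n+4-(j-1) = 2*n+5-j by omega,
          show (2+2*κ)^(2*n+6-j) = (2+2*κ) * (2+2*κ)^(2*n+5-j) by
            rw [← pow_succ']; congr 1; omega]
        ring
    have eb : markovPoint n κ (bIdx n j)
        = (2+2*κ) * markovPoint n κ j + (1-(2+2*κ)) := by
      by_cases h1 : j ≤ 2*n+3
      · rw [bIdx_F hj5 h1, mp_sIdx' n κ hn (by omega) (by omega) heq,
          mp_high n κ hn (show n+5 ≤ j by omega) (show j < 2*n+4 by omega),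
          show (2+2*κ)^(2*n+5-j) = (2+2*κ) * (2+2*κ)^(2*n+4-j) by
            rw [← pow_succ']; congr 1; omega]
        ring
      · have hj4 : j = 2*n+4 := by omega
        rw [hj4, bIdx_top hn, mp_top n κ hn]; ring
    rw [ea, eb]
    exact ⟨rfl, by ring⟩

end spec

section mat
variable {n : ℕ} {κ : ℝ}

lemma Amat_apply (hn : 1 ≤ n) (hκ0 : 0 < κ) (hκ2 : κ < 1/2)
    (heq : (2 + 2*κ)^n * κ = 1) (i j : Fin (2*n+4)) :
    Amat n κ i j = if aIdx n ((j:ℕ)+1) ≤ (i:ℕ) ∧ (i:ℕ)+1 ≤ bIdx n ((j:ℕ)+1)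
      then 1 else 0 := by
  have hii : (i:ℕ) + 1 ≤ 2*n+4 := i.2
  have hjj : (j:ℕ) + 1 ≤ 2*n+4 := j.2
  have hspec := (image_spec hn hκ0 hκ2 heq (j := (j:ℕ)+1) (by omega) hjj).1
  have hstep : markovPoint n κ (i:ℕ) < markovPoint n κ ((i:ℕ)+1) :=
    pm_step hn hκ0 hκ2 heq i.2
  have hiff : (markovInterval n κ ((i:ℕ)+1) ⊆ pairedTent κ '' markovInterval n κ ((j:ℕ)+1))
      ↔ (aIdx n ((j:ℕ)+1) ≤ (i:ℕ) ∧ (i:ℕ)+1 ≤ bIdx n ((j:ℕ)+1)) := by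
    rw [hspec]
    unfold markovInterval
    rw [Nat.add_sub_cancel, Set.Ioo_subset_Ioo_iff hstep]
    constructor
    · rintro ⟨h1, h2⟩
      exact ⟨pm_le_rev hn hκ0 hκ2 heq (aIdx_le hjj) (by omega) h1,
        pm_le_rev hn hκ0 hκ2 heq hii (bIdx_le hjj) h2⟩
    · rintro ⟨h1, h2⟩
      exact ⟨pm_le hn hκ0 hκ2 heq h1 (by omega), pm_le hn hκ0 hκ2 heq h2 (bIdx_le hjj)⟩
  classical
  unfold Amat
  rw [Matrix.of_apply]
  exact if_congr hiff rfl rfl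

lemma rowsum_real (hn : 1 ≤ n) (hκ0 : 0 < κ) (hκ2 : κ < 1/2)
    (heq : (2 + 2*κ)^n * κ = 1) (j : Fin (2*n+4)) :
    ∑ i : Fin (2*n+4), (if aIdx n ((j:ℕ)+1) ≤ (i:ℕ) ∧ (i:ℕ)+1 ≤ bIdx n ((j:ℕ)+1)
      then markovPoint n κ ((i:ℕ)+1) - markovPoint n κ (i:ℕ) else 0)
    = (2+2*κ) * (markovPoint n κ ((j:ℕ)+1) - markovPoint n κ (j:ℕ)) := by
  have hl0 : (0:ℝ) < 2+2*κ := by linarith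
  have hjj : (j:ℕ)+1 ≤ 2*n+4 := j.2
  have hsp := (image_spec hn hκ0 hκ2 heq (j := (j:ℕ)+1) (by omega) hjj).2
  rw [Nat.add_sub_cancel] at hsp
  have hb4 : bIdx n ((j:ℕ)+1) ≤ 2*n+4 := bIdx_le hjj
  have ha4 : aIdx n ((j:ℕ)+1) ≤ 2*n+4 := aIdx_le hjj
  have hab : aIdx n ((j:ℕ)+1) ≤ bIdx n ((j:ℕ)+1) := by
    by_contra hc
    have h1 : markovPoint n κ (bIdx n ((j:ℕ)+1)) ≤ markovPoint n κ (aIdx n ((j:ℕ)+1)) :=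
      pm_le hn hκ0 hκ2 heq (by omega) ha4
    have h2 : markovPoint n κ (j:ℕ) < markovPoint n κ ((j:ℕ)+1) :=
      pm_step hn hκ0 hκ2 heq j.2
    have h3 := mul_pos hl0 (sub_pos.2 h2)
    linarith
  rw [Fin.sum_univ_eq_sum_range (fun i => if aIdx n ((j:ℕ)+1) ≤ i ∧ i+1 ≤ bIdx n ((j:ℕ)+1)
      then markovPoint n κ (i+1) - markovPoint n κ i else 0)]
  rw [← Finset.sum_filter]
  rw [show (Finset.range (2*n+4)).filter
        (fun i => aIdx n ((j:ℕ)+1) ≤ i ∧ i+1 ≤ bIdx n ((j:ℕ)+1)) = Finset.Ico (aIdx n ((j:ℕ)+1)) (bIdx n ((j:ℕ)+1)) by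
      ext k
      simp only [Finset.mem_filter, Finset.mem_range, Finset.mem_Ico]
      omega]
  rw [Finset.sum_Ico_eq_sub _ hab, Finset.sum_range_sub (fun i => markovPoint n κ i),
    Finset.sum_range_sub (fun i => markovPoint n κ i)]
  linarith

end mat


/-- For every `n ≥ 1`, the spectral radius of `A_n` is `2 + 2κ_n`: the number
`2 + 2κ_n` is an eigenvalue of `A_n`, and every eigenvalue `μ` of `A_n` satisfies
`|μ| ≤ 2 + 2κ_n`. -/
theorem Amat_spectral_radius (n : ℕ) (hn : 1 ≤ n) (κ : ℝ)
    (hκ : κ ∈ Set.Ioo (0 : ℝ) (1/2)) (heq : (2 + 2*κ)^n * κ = 1) :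
    ((2 + 2*κ : ℝ) : ℂ) ∈ spectrum ℂ (Amat n κ) ∧
    ∀ μ ∈ spectrum ℂ (Amat n κ), ‖μ‖ ≤ 2 + 2*κ := by
  obtain ⟨hκ0, hκ2⟩ := hκ
  have hl0 : (0:ℝ) < 2+2*κ := by linarith
  have hellpos : ∀ i : Fin (2*n+4),
      0 < markovPoint n κ ((i:ℕ)+1) - markovPoint n κ (i:ℕ) :=
    fun i => sub_pos.2 (pm_step hn hκ0 hκ2 heq i.2)
  -- transpose mulVec formula
  have hmul : ∀ (w : Fin (2*n+4) → ℂ) (j : Fin (2*n+4)),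
      ((Amat n κ)ᵀ *ᵥ w) j
        = ∑ i : Fin (2*n+4), (if aIdx n ((j:ℕ)+1) ≤ (i:ℕ) ∧ (i:ℕ)+1 ≤ bIdx n ((j:ℕ)+1)
            then w i else 0) := by
    intro w j
    simp only [Matrix.mulVec, dotProduct, Matrix.transpose_apply]
    exact Finset.sum_congr rfl fun i _ => by
      rw [Amat_apply hn hκ0 hκ2 heq i j, ite_mul, one_mul, zero_mul]
  -- the positive eigenvector (interval lengths), complexified
  set L : Fin (2*n+4) → ℂ :=
    fun i => ((markovPoint n κ ((i:ℕ)+1) - markovPoint n κ (i:ℕ) : ℝ) : ℂ) with hLdef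
  have hrowC : ∀ j : Fin (2*n+4),
      ∑ i : Fin (2*n+4), (if aIdx n ((j:ℕ)+1) ≤ (i:ℕ) ∧ (i:ℕ)+1 ≤ bIdx n ((j:ℕ)+1)
        then L i else 0)
      = (((2+2*κ) * (markovPoint n κ ((j:ℕ)+1) - markovPoint n κ (j:ℕ)) : ℝ) : ℂ) := by
    intro j
    rw [← rowsum_real hn hκ0 hκ2 heq j, Complex.ofReal_sum]
    exact Finset.sum_congr rfl fun i _ => by split_ifs <;> simp [hLdef]
  have hL : (Amat n κ)ᵀ *ᵥ L = ((2+2*κ : ℝ) : ℂ) • L := by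
    funext j
    rw [hmul L j, hrowC j]
    simp only [hLdef, Pi.smul_apply, smul_eq_mul]
    push_cast
    ring
  have hLne : L ≠ 0 := by
    intro h
    have h0 : (0:ℕ) < 2*n+4 := by omega
    have h1 := congrFun h ⟨0, h0⟩
    simp only [hLdef, Pi.zero_apply, Complex.ofReal_eq_zero] at h1
    linarith [hellpos ⟨0, h0⟩]
  have hdetT : (((2+2*κ:ℝ):ℂ) • (1 : Matrix (Fin (2*n+4)) (Fin (2*n+4)) ℂ)
      - (Amat n κ)ᵀ).det = 0 := by
    rw [← Matrix.exists_mulVec_eq_zero_iff]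
    refine ⟨L, hLne, ?_⟩
    rw [Matrix.sub_mulVec, Matrix.smul_mulVec, Matrix.one_mulVec, hL, sub_self]
  have htr : ∀ μ : ℂ, (μ • (1 : Matrix (Fin (2*n+4)) (Fin (2*n+4)) ℂ) - Amat n κ)ᵀ
      = μ • 1 - (Amat n κ)ᵀ := by
    intro μ
    rw [Matrix.transpose_sub, Matrix.transpose_smul, Matrix.transpose_one]
  constructor
  · rw [spectrum.mem_iff, Algebra.algebraMap_eq_smul_one,
      Matrix.isUnit_iff_isUnit_det, ← Matrix.det_transpose, htr, hdetT]
    simp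
  · intro μ hμ
    rw [spectrum.mem_iff, Algebra.algebraMap_eq_smul_one,
      Matrix.isUnit_iff_isUnit_det, isUnit_iff_ne_zero, not_not,
      ← Matrix.det_transpose, htr] at hμ
    obtain ⟨v, hv0, hv⟩ := Matrix.exists_mulVec_eq_zero_iff.2 hμ
    rw [Matrix.sub_mulVec, Matrix.smul_mulVec, Matrix.one_mulVec, sub_eq_zero] at hv
    have hveq : ∀ j : Fin (2*n+4),
        ∑ i : Fin (2*n+4), (if aIdx n ((j:ℕ)+1) ≤ (i:ℕ) ∧ (i:ℕ)+1 ≤ bIdx n ((j:ℕ)+1)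
          then v i else 0) = μ * v j := by
      intro j
      have := congrFun hv j
      rw [Pi.smul_apply, smul_eq_mul] at this
      rw [← hmul v j, ← this]
    have h0 : (0:ℕ) < 2*n+4 := by omega
    obtain ⟨j0, -, hj0⟩ := Finset.exists_max_image Finset.univ
      (fun i : Fin (2*n+4) => ‖v i‖
        / (markovPoint n κ ((i:ℕ)+1) - markovPoint n κ (i:ℕ)))
      ⟨⟨0, h0⟩, Finset.mem_univ _⟩
    set c := ‖v j0‖ / (markovPoint n κ ((j0:ℕ)+1) - markovPoint n κ (j0:ℕ))
      with hcdef
    have hvle : ∀ i : Fin (2*n+4),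
        ‖v i‖ ≤ c * (markovPoint n κ ((i:ℕ)+1) - markovPoint n κ (i:ℕ)) := by
      intro i
      have h := hj0 i (Finset.mem_univ i)
      exact (div_le_iff₀ (hellpos i)).1 h
    have hc0 : 0 < c := by
      obtain ⟨i, hi⟩ := Function.ne_iff.1 hv0
      have h1 : 0 < ‖v i‖ := by
        exact norm_pos_iff.2 hi
      have h2 := hj0 i (Finset.mem_univ i)
      have h3 : 0 < ‖v i‖ / (markovPoint n κ ((i:ℕ)+1) - markovPoint n κ (i:ℕ)) :=
        div_pos h1 (hellpos i)
      linarith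
    have h1 : ‖μ * v j0‖
        ≤ c * ((2+2*κ) * (markovPoint n κ ((j0:ℕ)+1) - markovPoint n κ (j0:ℕ))) := by
      rw [← hveq j0]
      calc ‖(∑ i : Fin (2*n+4),
              (if aIdx n ((j0:ℕ)+1) ≤ (i:ℕ) ∧ (i:ℕ)+1 ≤ bIdx n ((j0:ℕ)+1) then v i else 0))‖
          ≤ ∑ i : Fin (2*n+4), ‖
              (if aIdx n ((j0:ℕ)+1) ≤ (i:ℕ) ∧ (i:ℕ)+1 ≤ bIdx n ((j0:ℕ)+1) then v i else 0)‖ :=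
            norm_sum_le _ _
        _ ≤ ∑ i : Fin (2*n+4),
              (if aIdx n ((j0:ℕ)+1) ≤ (i:ℕ) ∧ (i:ℕ)+1 ≤ bIdx n ((j0:ℕ)+1)
                then c * (markovPoint n κ ((i:ℕ)+1) - markovPoint n κ (i:ℕ)) else 0) := by
            refine Finset.sum_le_sum fun i _ => ?_
            split_ifs with h
            · exact hvle i
            · simp
        _ = c * ∑ i : Fin (2*n+4),
              (if aIdx n ((j0:ℕ)+1) ≤ (i:ℕ) ∧ (i:ℕ)+1 ≤ bIdx n ((j0:ℕ)+1)
                then (markovPoint n κ ((i:ℕ)+1) - markovPoint n κ (i:ℕ)) else 0) := by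
            rw [Finset.mul_sum]
            exact Finset.sum_congr rfl fun i _ => by split_ifs <;> simp
        _ = c * ((2+2*κ) * (markovPoint n κ ((j0:ℕ)+1) - markovPoint n κ (j0:ℕ))) := by
            rw [rowsum_real hn hκ0 hκ2 heq j0]
    have h2 : ‖v j0‖ = c * (markovPoint n κ ((j0:ℕ)+1) - markovPoint n κ (j0:ℕ)) := by
      rw [hcdef, div_mul_cancel₀]
      exact ne_of_gt (hellpos j0)
    rw [norm_mul, h2] at h1
    have h3 : 0 < c * (markovPoint n κ ((j0:ℕ)+1) - markovPoint n κ (j0:ℕ)) :=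
      mul_pos hc0 (hellpos j0)
    nlinarith [h1, h3]
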